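/- Let N+ be a rooted binary phylogenetic network on taxon set X, and let M+ be the induced network on a subset Y ⊆ X. Then any set of four taxa of Y that is a B-quartet on M+ is a B-quartet on N+. -/
import Mathlib


/-!
# Common framework

Finite directed multigraphs, undirected connectivity, numbers of connected
components, cut edges, subgraphs, blobs, blobs determined by leaf sets,
B-quartets, and quartets displayed via cut-edge separation.

A *network* is modelled as a finite directed multigraph (edge directions are
simply ignored for the undirected notions of connectivity, cut edges and
blobs).
-/

/-- A finite directed multigraph: finite types of nodes and of edges, with
source and target maps. -/
structure MDigraph where
  V : Type
  E : Type
  finV : Finite V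
  finE : Finite E
  src : E → V
  tgt : E → V

attribute [instance] MDigraph.finV MDigraph.finE

namespace MDigraph

section Basic

variable (G : MDigraph)

/-- One undirected step between `u` and `v` along an edge from the set `F`. -/
def Step (F : Set G.E) (u v : G.V) : Prop :=
  ∃ e ∈ F, (G.src e = u ∧ G.tgt e = v) ∨ (G.src e = v ∧ G.tgt e = u)

/-- Undirected reachability (an undirected path) using only edges in `F`. -/
def Conn (F : Set G.E) (u v : G.V) : Prop :=
  Relation.ReflTransGen (G.Step F) u v

/-- One directed step from `u` to `v` along an edge from the set `F`. -/
def DStep (F : Set G.E) (u v : G.V) : Prop :=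
  ∃ e ∈ F, G.src e = u ∧ G.tgt e = v

/-- Directed reachability (a directed path) using only edges in `F`. -/
def DConn (F : Set G.E) (u v : G.V) : Prop :=
  Relation.ReflTransGen (G.DStep F) u v

/-- `u` is above (ancestral to) `v`: there is a directed path from `u` to `v`. -/
def Above (u v : G.V) : Prop := G.DConn Set.univ u v

/-- In-degree of a node. -/
noncomputable def inDeg (v : G.V) : ℕ := Nat.card {e : G.E // G.tgt e = v}

/-- Out-degree of a node. -/
noncomputable def outDeg (v : G.V) : ℕ := Nat.card {e : G.E // G.src e = v}

/-- Undirected degree of a node (a loop counts twice). -/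
noncomputable def degree (v : G.V) : ℕ := G.inDeg v + G.outDeg v

/-- The number of connected components of the graph with node set `W` and edge
set the restriction to `W` of `F` (two nodes of `W` lie in the same connected
component iff they are joined by an undirected path). -/
noncomputable def numComponents (W : Set G.V) (F : Set G.E) : ℕ :=
  Nat.card (Quot (fun u v : W => G.Step {e ∈ F | G.src e ∈ W ∧ G.tgt e ∈ W} u.1 v.1))

/-- `v` lies on every directed path from `u` to `w`: there is no directed path
from `u` to `w` all of whose nodes avoid `v`. -/
def OnEveryPath (v u w : G.V) : Prop :=
  ¬ (u ≠ v ∧ w ≠ v ∧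
      Relation.ReflTransGen (fun a b => G.DStep Set.univ a b ∧ a ≠ v ∧ b ≠ v) u w)

end Basic

/-- A subgraph (subnetwork): a set of nodes together with a set of edges
joining them. -/
structure Subgraph (G : MDigraph) where
  verts : Set G.V
  edges : Set G.E
  src_mem : ∀ e ∈ edges, G.src e ∈ verts
  tgt_mem : ∀ e ∈ edges, G.tgt e ∈ verts

/-- The whole graph, as a subgraph of itself. -/
def top (G : MDigraph) : Subgraph G :=
  ⟨Set.univ, Set.univ, fun _ _ => Set.mem_univ _, fun _ _ => Set.mem_univ _⟩

namespace Subgraph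

variable {G : MDigraph}

/-- Containment of subgraphs. -/
def le (H K : Subgraph G) : Prop := H.verts ⊆ K.verts ∧ H.edges ⊆ K.edges

/-- The subgraph `H` is connected. -/
def IsConnected (H : Subgraph G) : Prop :=
  H.verts.Nonempty ∧ ∀ u ∈ H.verts, ∀ v ∈ H.verts, G.Conn H.edges u v

/-- Delete an edge from a subgraph. -/
def deleteEdge (H : Subgraph G) (e : G.E) : Subgraph G :=
  ⟨H.verts, H.edges \ {e}, fun e' he' => H.src_mem e' he'.1,
    fun e' he' => H.tgt_mem e' he'.1⟩

/-- The number of connected components of a subgraph. -/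
noncomputable def numComponents (H : Subgraph G) : ℕ :=
  G.numComponents H.verts H.edges

/-- `e` is a cut edge of the (sub)graph `H`: deleting it increases the number
of connected components. -/
def IsCutEdge (H : Subgraph G) (e : G.E) : Prop :=
  e ∈ H.edges ∧ H.numComponents < (H.deleteEdge e).numComponents

end Subgraph

variable {G : MDigraph}

/-- `B` is a blob of the network `H`: a maximal connected subnetwork of `H`
having no cut edges.  (A blob is *trivial* if it consists of a single node.) -/
def IsBlobIn (H B : Subgraph G) : Prop :=
  B.le H ∧ B.IsConnected ∧ (∀ e, ¬ B.IsCutEdge e) ∧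
    ∀ B' : Subgraph G, B'.le H → B'.IsConnected → (∀ e, ¬ B'.IsCutEdge e) →
      B.le B' → B'.le B

/-- `e` is a cut edge of the network `H` incident to the blob `B`: exactly one
of its endpoints is a node of `B`. -/
def IncidentCut (H B : Subgraph G) (e : G.E) : Prop :=
  H.IsCutEdge e ∧ Xor' (G.src e ∈ B.verts) (G.tgt e ∈ B.verts)

/-- The blob `B` of the network `H` is determined by the set `S` of leaf
labels: deletion of the cut edges of `H` incident to `B` leaves the nodes
labelled by the elements of `S` in distinct connected components. -/
def DeterminesIn {X : Type} (H B : Subgraph G) (leaf : X → G.V) (S : Set X) : Prop :=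
  ∀ s ∈ S, ∀ t ∈ S, s ≠ t →
    ¬ G.Conn {e ∈ H.edges | ¬ IncidentCut H B e} (leaf s) (leaf t)

/-- Four taxa form a B-quartet on the network `H`: some blob of `H` is
determined by them. -/
def BQuartetIn {X : Type} (H : Subgraph G) (leaf : X → G.V) (a b c d : X) : Prop :=
  ∃ B : Subgraph G, IsBlobIn H B ∧ DeterminesIn H B leaf ({a, b, c, d} : Set X)

/-- Some cut edge of `H` separates the taxa `p, q` from the taxa `r, s`: after
its deletion `p, q` lie in one connected component and `r, s` in another.  For
a 4-taxon set `{p,q,r,s}` this says exactly that the (reduced unrooted) tree of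
blobs of `H` displays the resolved quartet `pq|rs` (the edges of the tree of
blobs correspond exactly to the cut edges of the network, and suppressing
degree-2 nodes or contracting blobs does not affect which taxa a cut edge
separates). -/
def CutSep {X : Type} (H : Subgraph G) (leaf : X → G.V) (p q r s : X) : Prop :=
  ∃ e, H.IsCutEdge e ∧
    G.Conn (H.edges \ {e}) (leaf p) (leaf q) ∧
    G.Conn (H.edges \ {e}) (leaf r) (leaf s) ∧
    ¬ G.Conn (H.edges \ {e}) (leaf p) (leaf r)

end MDigraph
open MDigraph in
/-- A rooted binary phylogenetic network on the taxon set `X`: a connected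
directed acyclic graph whose node set consists of a root (in-degree 0,
out-degree 2), leaves (in-degree 1, out-degree 0) bijectively labelled by `X`,
tree nodes (in-degree 1, out-degree 2) and hybrid nodes (in-degree 2,
out-degree 1). -/
structure PhyloNetwork (X : Type) extends MDigraph where
  root : toMDigraph.V
  leaf : X → toMDigraph.V
  leaf_inj : Function.Injective leaf
  root_in : toMDigraph.inDeg root = 0
  root_out : toMDigraph.outDeg root = 2
  leaf_in : ∀ x, toMDigraph.inDeg (leaf x) = 1
  leaf_out : ∀ x, toMDigraph.outDeg (leaf x) = 0
  internal : ∀ v, v ≠ root → (∀ x, v ≠ leaf x) →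
      (toMDigraph.inDeg v = 1 ∧ toMDigraph.outDeg v = 2) ∨
      (toMDigraph.inDeg v = 2 ∧ toMDigraph.outDeg v = 1)
  acyclic : ∀ v, ¬ Relation.TransGen (toMDigraph.DStep Set.univ) v v
  conn : ∀ u v, toMDigraph.Conn Set.univ u v

namespace PhyloNetwork

open MDigraph

variable {X : Type} (N : PhyloNetwork X)

/-- The subnetwork of `N⁺` consisting of all nodes and edges ancestral to at
least one taxon in `Y`.  Since suppressing nodes of in- and out-degree 1
affects neither blobs, nor cut edges, nor which sets of taxa they separate,
this subnetwork faithfully represents the induced network `N⁺_Y`. -/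
def inducedSub (Y : Set X) : Subgraph N.toMDigraph where
  verts := {v | ∃ y ∈ Y, N.toMDigraph.Above v (N.leaf y)}
  edges := {e | ∃ y ∈ Y, N.toMDigraph.Above (N.toMDigraph.tgt e) (N.leaf y)}
  src_mem := by
    rintro e ⟨y, hy, h⟩
    exact ⟨y, hy, Relation.ReflTransGen.head ⟨e, Set.mem_univ e, rfl, rfl⟩ h⟩
  tgt_mem := by
    rintro e ⟨y, hy, h⟩
    exact ⟨y, hy, h⟩

/-- `v` is a stable ancestor of the leaves: it is ancestral to every leaf and
lies on every directed path from the root to any leaf. -/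
def IsStableAncestor (v : N.toMDigraph.V) : Prop :=
  (∀ x, N.toMDigraph.Above v (N.leaf x)) ∧
  ∀ x, N.toMDigraph.OnEveryPath v N.root (N.leaf x)

/-- `v` is the lowest stable ancestor (LSA) of the network: a stable ancestor
below all stable ancestors. -/
def IsLSA (v : N.toMDigraph.V) : Prop :=
  N.IsStableAncestor v ∧ ∀ u, N.IsStableAncestor u → N.toMDigraph.Above u v

/-- The number of cut edges of `N⁺` incident to the blob `B`. -/
noncomputable def blobDeg (B : Subgraph N.toMDigraph) : ℕ :=
  Nat.card {e : N.toMDigraph.E // IncidentCut (top N.toMDigraph) B e}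

/-- `B` is an `m`-blob of the rooted network `N⁺`: if the root is not in `B`
then `B` has exactly `m` incident cut edges, while if the root is in `B` then
`B` has exactly `m - 1` incident cut edges. -/
def IsMBlob (B : Subgraph N.toMDigraph) (m : ℕ) : Prop :=
  IsBlobIn (top N.toMDigraph) B ∧
    ((N.root ∈ B.verts ∧ m = N.blobDeg B + 1) ∨ (N.root ∉ B.verts ∧ m = N.blobDeg B))

end PhyloNetwork

open MDigraph


/-! ## Auxiliary development for Statement 2 -/

open Relation in
theorem _root_.quot_eq_iff_eqvGen {α : Type*} {r : α → α → Prop} {x y : α} :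
    Quot.mk r x = Quot.mk r y ↔ Relation.EqvGen r x y := Quot.eq

namespace MDigraph

open Relation

variable {G : MDigraph}

lemma step_symm {F : Set G.E} {u v : G.V} (h : G.Step F u v) : G.Step F v u := by
  obtain ⟨e, he, h⟩ := h; exact ⟨e, he, h.symm⟩

lemma conn_symm {F : Set G.E} {u v : G.V} (h : G.Conn F u v) : G.Conn F v u := by
  induction h with
  | refl => exact .refl
  | tail _ hstep ih => exact Relation.ReflTransGen.head (step_symm hstep) ih

lemma conn_trans {F : Set G.E} {u v w : G.V} (h1 : G.Conn F u v) (h2 : G.Conn F v w) :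
    G.Conn F u w := h1.trans h2

lemma conn_mono {F : Set G.E} {u v : G.V} (hc : G.Conn F u v) {F' : Set G.E} (h : F ⊆ F') :
    G.Conn F' u v := by
  induction hc with
  | refl => exact .refl
  | tail _ hstep ih =>
      obtain ⟨e, he, ho⟩ := hstep
      exact ih.tail ⟨e, h he, ho⟩

/-- Two-edge-connectivity relation: `u` and `v` stay connected after deleting any
single edge. -/
def RRel (G : MDigraph) (u v : G.V) : Prop :=
  ∀ e : G.E, G.Conn (Set.univ \ {e}) u v

lemma rrel_refl (G : MDigraph) (u : G.V) : G.RRel u u := fun _ => .refl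

lemma rrel_symm {u v : G.V} (h : G.RRel u v) : G.RRel v u := fun e => conn_symm (h e)

lemma rrel_trans {u v w : G.V} (h1 : G.RRel u v) (h2 : G.RRel v w) : G.RRel u w :=
  fun e => (h1 e).trans (h2 e)

/-- If the endpoints of an edge `e` are connected avoiding `e`, they are
two-edge-connected. -/
lemma rrel_of_conn_del {e : G.E} {u v : G.V}
    (ho : (G.src e = u ∧ G.tgt e = v) ∨ (G.src e = v ∧ G.tgt e = u))
    (h : G.Conn (Set.univ \ {e}) u v) : G.RRel u v := by
  intro e'
  by_cases he' : e' = e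
  · subst he'; exact h
  · exact Relation.ReflTransGen.single ⟨e, ⟨trivial, fun hmem => he' hmem.symm⟩, ho⟩

/-- The simple graph underlying the multigraph, keeping only edges from `F`. -/
def SG (G : MDigraph) (F : Set G.E) : SimpleGraph G.V := SimpleGraph.fromRel (G.Step F)

lemma sg_adj {F : Set G.E} {u v : G.V} (h : (SG G F).Adj u v) : u ≠ v ∧ G.Step F u v := by
  rw [SG, SimpleGraph.fromRel_adj] at h
  obtain ⟨hne, h | h⟩ := h
  exacts [⟨hne, h⟩, ⟨hne, step_symm h⟩]

lemma conn_toReachable {F : Set G.E} {u v : G.V} (h : G.Conn F u v) :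
    (SG G F).Reachable u v := by
  induction h with
  | refl => exact ⟨.nil⟩
  | @tail b c _ hstep ih =>
      by_cases hbc : b = c
      · subst hbc; exact ih
      · exact ih.trans ⟨.cons ((SimpleGraph.fromRel_adj _ _ _).mpr ⟨hbc, Or.inl hstep⟩) .nil⟩

lemma walk_conn_restrict {F : Set G.E} {K : Set G.V} {u v : G.V} (p : (SG G F).Walk u v)
    (hsup : ∀ z ∈ p.support, z ∈ K) :
    G.Conn {e ∈ F | G.src e ∈ K ∧ G.tgt e ∈ K} u v := by
  induction p with
  | nil => exact .refl
  | @cons a b c h q ih =>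
      obtain ⟨hne, e, he, ho⟩ := sg_adj h
      have ha : a ∈ K := hsup a (by simp)
      have hb : b ∈ K := hsup b (by simp)
      have hmem : e ∈ {e ∈ F | G.src e ∈ K ∧ G.tgt e ∈ K} := by
        rcases ho with ⟨hs, ht⟩ | ⟨hs, ht⟩
        · exact ⟨he, hs ▸ ha, ht ▸ hb⟩
        · exact ⟨he, hs ▸ hb, ht ▸ ha⟩
      exact Relation.ReflTransGen.head ⟨e, hmem, ho⟩
        (ih fun z hz => hsup z (by simp [hz]))

/-- If a walk joins `x` to `z` but `x` and `z` are disconnected once `eb` is deleted,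
then some dart of the walk is realizable only by the edge `eb`. -/
lemma walk_forced_edge {F : Set G.E} {eb : G.E} {x z : G.V} (p : (SG G F).Walk x z)
    (hnc : ¬ G.Conn (F \ {eb}) x z) :
    ∃ d ∈ p.darts, (G.src eb = d.fst ∧ G.tgt eb = d.snd) ∨
      (G.src eb = d.snd ∧ G.tgt eb = d.fst) := by
  induction p with
  | nil => exact absurd .refl hnc
  | @cons a b c h q ih =>
      by_cases hstep : G.Step (F \ {eb}) a b
      · have hb : ¬ G.Conn (F \ {eb}) b c := fun hc =>
          hnc (Relation.ReflTransGen.head hstep hc)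
        obtain ⟨d, hd, hp⟩ := ih hb
        exact ⟨d, by simp [SimpleGraph.Walk.darts_cons, hd], hp⟩
      · obtain ⟨hne, e, he, ho⟩ := sg_adj h
        have heb : e = eb := by
          by_contra hne'
          exact hstep ⟨e, ⟨he, fun hmem => hne' hmem⟩, ho⟩
        subst heb
        refine ⟨⟨(a, b), h⟩, by simp [SimpleGraph.Walk.darts_cons], ?_⟩
        exact ho

/-- All vertices on a simple path between two vertices of a two-edge-connected
class stay inside the class. -/
lemma path_support_in_class {F : Set G.E} {b0 u v : G.V} (hu : G.RRel b0 u)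
    (hv : G.RRel b0 v) (p : (SG G F).Walk u v) (hp : p.IsPath) :
    ∀ z ∈ p.support, G.RRel b0 z := by
  classical
  haveI : DecidableEq G.V := Classical.decEq _
  intro z hz
  by_contra hzK
  obtain ⟨eb, hnc⟩ : ∃ e, ¬ G.Conn (Set.univ \ {e}) b0 z := by
    simpa [RRel, not_forall] using hzK
  have hsubF : F \ {eb} ⊆ Set.univ \ {eb} := fun f hf => ⟨trivial, hf.2⟩
  have h1 : ¬ G.Conn (F \ {eb}) u z := fun hc =>
    hnc ((hu eb).trans (conn_mono hc hsubF))
  have h2 : ¬ G.Conn (F \ {eb}) z v := fun hc =>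
    hnc ((hv eb).trans (conn_symm (conn_mono hc hsubF)))
  obtain ⟨d1, hd1, ho1⟩ := walk_forced_edge (p.takeUntil z hz) h1
  obtain ⟨d2, hd2, ho2⟩ := walk_forced_edge (p.dropUntil z hz) h2
  have hnd : ((p.takeUntil z hz).append (p.dropUntil z hz)).support.Nodup := by
    rw [SimpleGraph.Walk.take_spec]
    exact hp.support_nodup
  rw [SimpleGraph.Walk.support_append] at hnd
  have key : ∀ w, w ∈ (p.takeUntil z hz).support → w ∈ (p.dropUntil z hz).support → w = z := by
    intro w hw1 hw2
    rw [SimpleGraph.Walk.support_eq_cons (p.dropUntil z hz)] at hw2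
    rcases List.mem_cons.mp hw2 with hwz | hw2'
    · exact hwz
    · exact absurd hw1 (fun hmem => (List.disjoint_of_nodup_append hnd) hmem hw2')
  have m1f : d1.fst ∈ (p.takeUntil z hz).support :=
    SimpleGraph.Walk.dart_fst_mem_support_of_mem_darts _ hd1
  have m1s : d1.snd ∈ (p.takeUntil z hz).support :=
    SimpleGraph.Walk.dart_snd_mem_support_of_mem_darts _ hd1
  have m2f : d2.fst ∈ (p.dropUntil z hz).support :=
    SimpleGraph.Walk.dart_fst_mem_support_of_mem_darts _ hd2
  have m2s : d2.snd ∈ (p.dropUntil z hz).support :=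
    SimpleGraph.Walk.dart_snd_mem_support_of_mem_darts _ hd2
  have hsrc1 : G.src eb ∈ (p.takeUntil z hz).support := by
    rcases ho1 with ⟨hs, _⟩ | ⟨hs, _⟩ <;> rw [hs] <;> assumption
  have htgt1 : G.tgt eb ∈ (p.takeUntil z hz).support := by
    rcases ho1 with ⟨_, ht⟩ | ⟨_, ht⟩ <;> rw [ht] <;> assumption
  have hsrc2 : G.src eb ∈ (p.dropUntil z hz).support := by
    rcases ho2 with ⟨hs, _⟩ | ⟨hs, _⟩ <;> rw [hs] <;> assumption
  have htgt2 : G.tgt eb ∈ (p.dropUntil z hz).support := by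
    rcases ho2 with ⟨_, ht⟩ | ⟨_, ht⟩ <;> rw [ht] <;> assumption
  have hsz : G.src eb = z := key _ hsrc1 hsrc2
  have htz : G.tgt eb = z := key _ htgt1 htgt2
  have : d1.fst = d1.snd := by
    rcases ho1 with ⟨hs, ht⟩ | ⟨hs, ht⟩
    · rw [← hs, ← ht, hsz, htz]
    · rw [← hs, ← ht, hsz, htz]
  exact d1.fst_ne_snd this

/-- Key class-connectivity lemma: two-edge-connected vertices are joined by a
path using only edges internal to the class, within any edge set that joins them. -/
lemma conn_inClass {F : Set G.E} {b0 u v : G.V} (hu : G.RRel b0 u) (hv : G.RRel b0 v)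
    (h : G.Conn F u v) :
    G.Conn {e ∈ F | G.RRel b0 (G.src e) ∧ G.RRel b0 (G.tgt e)} u v := by
  classical
  haveI : DecidableEq G.V := Classical.decEq _
  obtain ⟨w⟩ := conn_toReachable h
  have hall := path_support_in_class hu hv (w.toPath : (SG G F).Walk u v) w.toPath.2
  exact walk_conn_restrict _ hall

/-- Replace uses of a deleted edge by a detour. -/
lemma conn_del_of_conn {F : Set G.E} {e : G.E} {u v : G.V}
    (h : G.Conn F u v) (hst : G.Conn (F \ {e}) (G.src e) (G.tgt e)) :
    G.Conn (F \ {e}) u v := by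
  induction h with
  | refl => exact .refl
  | tail _ hstep ih =>
      obtain ⟨e', he', ho⟩ := hstep
      by_cases hee : e' = e
      · subst hee
        rcases ho with ⟨hs, ht⟩ | ⟨hs, ht⟩
        · exact ih.trans (hs ▸ ht ▸ hst)
        · exact ih.trans (hs ▸ ht ▸ conn_symm hst)
      · exact ih.tail ⟨e', ⟨he', fun hm => hee hm⟩, ho⟩

lemma eqvGen_of_conn {W : Set G.V} {F : Set G.E} {F0 : Set G.E}
    (hsub : F0 ⊆ {e ∈ F | G.src e ∈ W ∧ G.tgt e ∈ W})
    {x y : G.V} (h : G.Conn F0 x y) (hx : x ∈ W) :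
    ∃ hy : y ∈ W,
      EqvGen (fun u v : W => G.Step {e ∈ F | G.src e ∈ W ∧ G.tgt e ∈ W} u.1 v.1)
        ⟨x, hx⟩ ⟨y, hy⟩ := by
  induction h with
  | refl => exact ⟨hx, EqvGen.refl _⟩
  | @tail b c _ hstep ih =>
      obtain ⟨hb, hEq⟩ := ih
      obtain ⟨e, he, ho⟩ := hstep
      have hem := hsub he
      have hc : c ∈ W := by
        rcases ho with ⟨_, ht⟩ | ⟨hs, _⟩
        · exact ht ▸ hem.2.2
        · exact hs ▸ hem.2.1
      exact ⟨hc, hEq.trans _ _ _ (EqvGen.rel _ _ ⟨e, hem, ho⟩)⟩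

lemma conn_of_eqvGen {W : Set G.V} {F : Set G.E} {a b : W}
    (h : EqvGen (fun u v : W => G.Step {e ∈ F | G.src e ∈ W ∧ G.tgt e ∈ W} u.1 v.1) a b) :
    G.Conn {e ∈ F | G.src e ∈ W ∧ G.tgt e ∈ W} a.1 b.1 := by
  induction h with
  | rel _ _ h => exact Relation.ReflTransGen.single h
  | refl _ => exact .refl
  | symm _ _ _ ih => exact conn_symm ih
  | trans _ _ _ _ _ ih1 ih2 => exact ih1.trans ih2

section CutEdges

variable {H : Subgraph G}

lemma isCutEdge_of_not_conn {e : G.E} (he : e ∈ H.edges)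
    (h : ¬ G.Conn (H.edges \ {e}) (G.src e) (G.tgt e)) : H.IsCutEdge e := by
  classical
  refine ⟨he, ?_⟩
  let r1 := fun u v : H.verts =>
    G.Step {e' ∈ H.edges | G.src e' ∈ H.verts ∧ G.tgt e' ∈ H.verts} u.1 v.1
  let r2 := fun u v : H.verts =>
    G.Step {e' ∈ H.edges \ {e} | G.src e' ∈ H.verts ∧ G.tgt e' ∈ H.verts} u.1 v.1
  have h21 : ∀ a b, r2 a b → r1 a b := by
    rintro a b ⟨e', ⟨he', hW⟩, ho⟩
    exact ⟨e', ⟨he'.1, hW⟩, ho⟩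
  let phi : Quot r2 → Quot r1 := Quot.map id h21
  have hsur : Function.Surjective phi := by
    intro q
    induction q using Quot.ind with
    | _ a => exact ⟨Quot.mk _ a, rfl⟩
  have hmkne : Quot.mk r2 ⟨G.src e, H.src_mem e he⟩ ≠ Quot.mk r2 ⟨G.tgt e, H.tgt_mem e he⟩ := by
    intro hq
    exact h (conn_mono
      (conn_of_eqvGen (W := H.verts) (F := H.edges \ {e}) (Quot.eq.mp hq)) (fun f hf => hf.1))
  have hninj : ¬ Function.Injective phi := by
    intro hinj
    refine hmkne (hinj ?_)
    show Quot.mk r1 _ = Quot.mk r1 _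
    exact Quot.sound ⟨e, ⟨he, H.src_mem e he, H.tgt_mem e he⟩, Or.inl ⟨rfl, rfl⟩⟩
  have hle : Nat.card (Quot r1) ≤ Nat.card (Quot r2) :=
    Nat.card_le_card_of_surjective phi hsur
  have hne : Nat.card (Quot r1) ≠ Nat.card (Quot r2) := by
    intro hEq
    exact hninj (((Nat.bijective_iff_surjective_and_card phi).mpr ⟨hsur, hEq.symm⟩).injective)
  exact lt_of_le_of_ne hle hne

lemma conn_of_not_isCutEdge {e : G.E} (he : e ∈ H.edges) (h : ¬ H.IsCutEdge e) :
    G.Conn (H.edges \ {e}) (G.src e) (G.tgt e) := by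
  classical
  let r1 := fun u v : H.verts =>
    G.Step {e' ∈ H.edges | G.src e' ∈ H.verts ∧ G.tgt e' ∈ H.verts} u.1 v.1
  let r2 := fun u v : H.verts =>
    G.Step {e' ∈ H.edges \ {e} | G.src e' ∈ H.verts ∧ G.tgt e' ∈ H.verts} u.1 v.1
  have h21 : ∀ a b, r2 a b → r1 a b := by
    rintro a b ⟨e', ⟨he', hW⟩, ho⟩
    exact ⟨e', ⟨he'.1, hW⟩, ho⟩
  let phi : Quot r2 → Quot r1 := Quot.map id h21
  have hsur : Function.Surjective phi := by
    intro q
    induction q using Quot.ind with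
    | _ a => exact ⟨Quot.mk _ a, rfl⟩
  have hle : Nat.card (Quot r1) ≤ Nat.card (Quot r2) :=
    Nat.card_le_card_of_surjective phi hsur
  have hle2 : Nat.card (Quot r2) ≤ Nat.card (Quot r1) := by
    by_contra hlt
    exact h ⟨he, lt_of_not_ge hlt⟩
  have hbij := (Nat.bijective_iff_surjective_and_card phi).mpr ⟨hsur, le_antisymm hle2 hle⟩
  have hmk : Quot.mk r2 ⟨G.src e, H.src_mem e he⟩ = Quot.mk r2 ⟨G.tgt e, H.tgt_mem e he⟩ := by
    apply hbij.injective
    show Quot.mk r1 _ = Quot.mk r1 _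
    exact Quot.sound ⟨e, ⟨he, H.src_mem e he, H.tgt_mem e he⟩, Or.inl ⟨rfl, rfl⟩⟩
  exact conn_mono (conn_of_eqvGen (W := H.verts) (F := H.edges \ {e}) (Quot.eq.mp hmk)) (fun f hf => hf.1)

/-- Vertices of a connected subgraph without cut edges stay connected after
deleting any single edge of the ambient graph. -/
lemma subgraph_rrel (hconn : H.IsConnected) (hnc : ∀ e, ¬ H.IsCutEdge e)
    {u v : G.V} (hu : u ∈ H.verts) (hv : v ∈ H.verts) : G.RRel u v := by
  intro e
  have h0 : G.Conn H.edges u v := hconn.2 u hu v hv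
  by_cases heH : e ∈ H.edges
  · exact conn_mono (conn_del_of_conn h0 (conn_of_not_isCutEdge heH (hnc e))) (fun f hf => ⟨trivial, hf.2⟩)
  · exact conn_mono h0 (fun f hf => ⟨trivial, fun hm => heH (by rwa [hm] at hf)⟩)

end CutEdges

/-- The canonical blob containing a given vertex: its two-edge-connected class. -/
def classBlob (G : MDigraph) (b0 : G.V) : Subgraph G where
  verts := {v | G.RRel b0 v}
  edges := {e | G.RRel b0 (G.src e) ∧ G.RRel b0 (G.tgt e)}
  src_mem := fun _ he => he.1
  tgt_mem := fun _ he => he.2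

lemma isBlobIn_classBlob (G : MDigraph) (hconnG : ∀ u v : G.V, G.Conn Set.univ u v)
    (b0 : G.V) : IsBlobIn (top G) (classBlob G b0) := by
  classical
  refine ⟨⟨fun _ _ => trivial, fun _ _ => trivial⟩, ?_, ?_, ?_⟩
  · refine ⟨⟨b0, rrel_refl G b0⟩, ?_⟩
    intro u hu v hv
    exact conn_mono (conn_inClass hu hv (hconnG u v)) (fun e he => he.2)
  · rintro e ⟨heB, hlt⟩
    have hsrcR : G.RRel b0 (G.src e) := heB.1
    have htgtR : G.RRel b0 (G.tgt e) := heB.2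
    let r1 := fun u v : (classBlob G b0).verts =>
      G.Step {e' ∈ (classBlob G b0).edges |
        G.src e' ∈ (classBlob G b0).verts ∧ G.tgt e' ∈ (classBlob G b0).verts} u.1 v.1
    let r2 := fun u v : (classBlob G b0).verts =>
      G.Step {e' ∈ (classBlob G b0).edges \ {e} |
        G.src e' ∈ (classBlob G b0).verts ∧ G.tgt e' ∈ (classBlob G b0).verts} u.1 v.1
    have hcard : Nat.card (Quot r1) = Nat.card (Quot r2) := by
      have h12 : ∀ a b, r1 a b → EqvGen r2 a b := by
        rintro a b ⟨e', he', ho⟩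
        by_cases hee : e' = e
        · subst hee
          have hco : G.Conn (Set.univ \ {e'}) (G.src e') (G.tgt e') :=
            (rrel_trans (rrel_symm hsrcR) htgtR) e'
          have hci := conn_inClass hsrcR htgtR hco
          have hsub : {f ∈ Set.univ \ {e'} | G.RRel b0 (G.src f) ∧ G.RRel b0 (G.tgt f)} ⊆
              {f ∈ (classBlob G b0).edges \ {e'} |
                G.src f ∈ (classBlob G b0).verts ∧ G.tgt f ∈ (classBlob G b0).verts} := by
            rintro f ⟨⟨_, hfe⟩, hc1, hc2⟩
            exact ⟨⟨⟨hc1, hc2⟩, hfe⟩, hc1, hc2⟩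
          obtain ⟨hyW, hEq⟩ := eqvGen_of_conn (W := (classBlob G b0).verts)
            (F := (classBlob G b0).edges \ {e'}) hsub (conn_mono hci (fun f hf => hf))
            (show G.src e' ∈ (classBlob G b0).verts from hsrcR)
          have ha : a = ⟨G.src e', hsrcR⟩ ∨ a = ⟨G.tgt e', htgtR⟩ := by
            rcases ho with ⟨hs, ht⟩ | ⟨hs, ht⟩
            · exact Or.inl (Subtype.ext hs.symm)
            · exact Or.inr (Subtype.ext ht.symm)
          have hb : b = ⟨G.src e', hsrcR⟩ ∨ b = ⟨G.tgt e', htgtR⟩ := by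
            rcases ho with ⟨hs, ht⟩ | ⟨hs, ht⟩
            · exact Or.inr (Subtype.ext ht.symm)
            · exact Or.inl (Subtype.ext hs.symm)
          have hEq' : EqvGen r2 ⟨G.src e', hsrcR⟩ ⟨G.tgt e', htgtR⟩ := by
            convert hEq using 2
          rcases ha with rfl | rfl <;> rcases hb with rfl | rfl
          · exact EqvGen.refl _
          · exact hEq'
          · exact EqvGen.symm _ _ hEq'
          · exact EqvGen.refl _
        · exact EqvGen.rel _ _ ⟨e', ⟨⟨he'.1, hee⟩, he'.2⟩, ho⟩
      have h21 : ∀ a b, r2 a b → r1 a b := by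
        rintro a b ⟨e', ⟨he', hW⟩, ho⟩
        exact ⟨e', ⟨he'.1, hW⟩, ho⟩
      -- build a bijection
      let phi : Quot r2 → Quot r1 := Quot.map id h21
      have hsur : Function.Surjective phi := by
        intro q
        induction q using Quot.ind with
        | _ a => exact ⟨Quot.mk _ a, rfl⟩
      have hmono : ∀ a a', EqvGen r1 a a' → EqvGen r2 a a' := by
        intro a a' hEq
        induction hEq with
        | rel x y hxy => exact h12 x y hxy
        | refl x => exact EqvGen.refl x
        | symm x y _ ih => exact EqvGen.symm x y ih
        | trans x y z _ _ ih1 ih2 => exact EqvGen.trans x y z ih1 ih2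
      have hinj : Function.Injective phi := by
        intro q q'
        induction q using Quot.ind with
        | _ a =>
          induction q' using Quot.ind with
          | _ a' =>
            intro hq
            exact Quot.eqvGen_sound (hmono _ _ (Quot.eq.mp hq))
      exact (Nat.card_eq_of_bijective phi ⟨hinj, hsur⟩).symm
    have hlt' : Nat.card (Quot r1) < Nat.card (Quot r2) := hlt
    rw [hcard] at hlt'
    exact lt_irrefl _ hlt'
  · intro B'' _ hconn'' hnc'' hBB''
    have hverts : B''.verts ⊆ (classBlob G b0).verts := by
      intro u hu
      exact subgraph_rrel hconn'' hnc'' (hBB''.1 (rrel_refl G b0)) hu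
    refine ⟨hverts, ?_⟩
    intro e he
    exact ⟨hverts (B''.src_mem e he), hverts (B''.tgt_mem e he)⟩

/-- Membership in a set `K` is invariant along paths whose edges do not cross `K`. -/
lemma conn_iff_mem {F : Set G.E} {K : Set G.V}
    (hF : ∀ e ∈ F, (G.src e ∈ K ↔ G.tgt e ∈ K)) {x y : G.V} (h : G.Conn F x y) :
    (x ∈ K ↔ y ∈ K) := by
  induction h with
  | refl => exact Iff.rfl
  | tail _ hstep ih =>
      obtain ⟨e, he, ho⟩ := hstep
      rcases ho with ⟨hs, ht⟩ | ⟨hs, ht⟩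
      · exact ih.trans (hs ▸ ht ▸ hF e he)
      · exact ih.trans (ht ▸ hs ▸ (hF e he).symm)

lemma conn_restrict_notmem {F : Set G.E} {K : Set G.V}
    (hF : ∀ e ∈ F, (G.src e ∈ K ↔ G.tgt e ∈ K)) {x y : G.V} (h : G.Conn F x y)
    (hx : x ∉ K) : G.Conn {e ∈ F | G.src e ∉ K ∧ G.tgt e ∉ K} x y := by
  induction h with
  | refl => exact .refl
  | @tail b c hxb hstep ih =>
      obtain ⟨e, he, ho⟩ := hstep
      have hbK : b ∉ K := fun hb => hx ((conn_iff_mem hF hxb).mpr hb)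
      have hcK : c ∉ K := by
        rcases ho with ⟨hs, ht⟩ | ⟨hs, ht⟩
        · exact fun hc => hbK (hs ▸ ((hF e he).mpr (ht ▸ hc)))
        · exact fun hc => hbK (ht ▸ ((hF e he).mp (hs ▸ hc)))
      exact ih.tail ⟨e, ⟨he, by
        rcases ho with ⟨hs, ht⟩ | ⟨hs, ht⟩
        · exact ⟨hs ▸ hbK, ht ▸ hcK⟩
        · exact ⟨hs ▸ hcK, ht ▸ hbK⟩⟩, ho⟩

/-- First-exit lemma: a path from outside `K` into `K` crosses the boundary at a
first boundary edge. -/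
lemma exists_exit {F : Set G.E} {K : Set G.V} {x y : G.V} (h : G.Conn F x y)
    (hx : x ∉ K) (hy : y ∈ K) :
    ∃ (w p : G.V) (g : G.E), w ∉ K ∧ p ∈ K ∧ g ∈ F ∧
      ((G.src g = w ∧ G.tgt g = p) ∨ (G.src g = p ∧ G.tgt g = w)) ∧
      G.Conn {e ∈ F | G.src e ∉ K ∧ G.tgt e ∉ K} x w := by
  classical
  revert hx
  induction h using Relation.ReflTransGen.head_induction_on with
  | refl => exact fun hx => absurd hy hx
  | @head a c hstep _ ih =>
      intro ha
      obtain ⟨e, he, ho⟩ := hstep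
      by_cases hcK : c ∈ K
      · exact ⟨a, c, e, ha, hcK, he, ho, .refl⟩
      · obtain ⟨w, p, g, hw, hp, hg, hog, hcw⟩ := ih hcK
        have hmem : e ∈ {e ∈ F | G.src e ∉ K ∧ G.tgt e ∉ K} := by
          rcases ho with ⟨hs, ht⟩ | ⟨hs, ht⟩
          · exact ⟨he, hs ▸ ha, ht ▸ hcK⟩
          · exact ⟨he, hs ▸ hcK, ht ▸ ha⟩
        exact ⟨w, p, g, hw, hp, hg, hog, Relation.ReflTransGen.head ⟨e, hmem, ho⟩ hcw⟩

lemma conn_of_dconn {F : Set G.E} {u v : G.V} (h : G.DConn F u v) : G.Conn F u v := by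
  induction h with
  | refl => exact .refl
  | tail _ hstep ih =>
      obtain ⟨e, he, hs, ht⟩ := hstep
      exact ih.tail ⟨e, he, Or.inl ⟨hs, ht⟩⟩

end MDigraph

namespace PhyloNetwork

open MDigraph

variable {X : Type} (N : PhyloNetwork X)

lemma exists_parent {v : N.toMDigraph.V} (hv : v ≠ N.root) : ∃ e, N.toMDigraph.tgt e = v := by
  have hpos : N.toMDigraph.inDeg v ≠ 0 := by
    by_cases hleaf : ∃ x, v = N.leaf x
    · obtain ⟨x, rfl⟩ := hleaf
      rw [N.leaf_in x]; exact one_ne_zero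
    · push_neg at hleaf
      rcases N.internal v hv hleaf with ⟨h1, _⟩ | ⟨h1, _⟩ <;> rw [h1] <;> simp
  have : Nonempty {e : N.toMDigraph.E // N.toMDigraph.tgt e = v} := by
    rcases Nat.card_ne_zero.mp hpos with ⟨hne, _⟩
    exact hne
  obtain ⟨e, he⟩ := this
  exact ⟨e, he⟩

lemma root_above (v : N.toMDigraph.V) : N.toMDigraph.DConn Set.univ N.root v := by
  have hwf : WellFounded (fun a b : N.toMDigraph.V =>
      Relation.TransGen (N.toMDigraph.DStep Set.univ) a b) := by
    have : IsTrans N.toMDigraph.V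
        (fun a b => Relation.TransGen (N.toMDigraph.DStep Set.univ) a b) :=
      ⟨fun _ _ _ h1 h2 => h1.trans h2⟩
    have : IsIrrefl N.toMDigraph.V
        (fun a b => Relation.TransGen (N.toMDigraph.DStep Set.univ) a b) :=
      ⟨fun v hv => N.acyclic v hv⟩
    exact Finite.wellFounded_of_trans_of_irrefl _
  induction v using WellFounded.induction hwf with
  | _ v ih =>
    by_cases hr : v = N.root
    · subst hr; exact .refl
    · obtain ⟨e, he⟩ := N.exists_parent hr
      have hstep : N.toMDigraph.DStep Set.univ (N.toMDigraph.src e) v :=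
        ⟨e, trivial, rfl, he⟩
      exact (ih _ (Relation.TransGen.single hstep)).tail hstep

lemma dconn_induced {Y : Set X} {u v : N.toMDigraph.V}
    (h : N.toMDigraph.DConn Set.univ u v) (hv : v ∈ (N.inducedSub Y).verts) :
    N.toMDigraph.DConn (N.inducedSub Y).edges u v := by
  obtain ⟨y, hy, hab⟩ := hv
  induction h using Relation.ReflTransGen.head_induction_on with
  | refl => exact .refl
  | head hstep hrest ih =>
      obtain ⟨e, _, hs, ht⟩ := hstep
      refine Relation.ReflTransGen.head ⟨e, ⟨y, hy, ?_⟩, hs, ht⟩ ih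
      rw [ht]
      exact hrest.trans hab

lemma induced_conn {Y : Set X} {u v : N.toMDigraph.V}
    (hu : u ∈ (N.inducedSub Y).verts) (hv : v ∈ (N.inducedSub Y).verts) :
    N.toMDigraph.Conn (N.inducedSub Y).edges u v :=
  (conn_symm (conn_of_dconn (N.dconn_induced (N.root_above u) hu))).trans
    (conn_of_dconn (N.dconn_induced (N.root_above v) hv))

/-- The two-edge-connected class of a leaf is trivial. -/
lemma rrel_leaf {x : X} {u : N.toMDigraph.V} (h : N.toMDigraph.RRel (N.leaf x) u) :
    u = N.leaf x := by
  have hout : IsEmpty {e : N.toMDigraph.E // N.toMDigraph.src e = N.leaf x} := by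
    have h0 : Nat.card {e : N.toMDigraph.E // N.toMDigraph.src e = N.leaf x} = 0 :=
      N.leaf_out x
    rcases Nat.card_eq_zero.mp h0 with hemp | hinf
    · exact hemp
    · exact absurd hinf (by exact not_infinite_iff_finite.mpr inferInstance)
  have hin : ∀ e e' : {e : N.toMDigraph.E // N.toMDigraph.tgt e = N.leaf x}, e = e' := by
    have h1 : Nat.card {e : N.toMDigraph.E // N.toMDigraph.tgt e = N.leaf x} = 1 :=
      N.leaf_in x
    have := (Nat.card_eq_one_iff_unique.mp h1).1
    exact fun e e' => Subsingleton.elim e e'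
  by_contra hne
  rcases Classical.em (∃ e0 : N.toMDigraph.E, N.toMDigraph.tgt e0 = N.leaf x) with ⟨e0, he0⟩ | hno
  · have hc := h e0
    rcases (Relation.ReflTransGen.cases_head hc) with heq | ⟨c, hstep, _⟩
    · exact hne heq.symm
    · obtain ⟨e, he, ho⟩ := hstep
      rcases ho with ⟨hs, _⟩ | ⟨_, ht⟩
      · exact hout.false ⟨e, hs⟩
      · have : (⟨e, ht⟩ : {e : N.toMDigraph.E // N.toMDigraph.tgt e = N.leaf x}) = ⟨e0, he0⟩ :=
          hin _ _
        have hee : e = e0 := congrArg Subtype.val this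
        exact he.2 (by rw [hee]; rfl)
  · -- no in-edge at all: contradicts leaf_in = 1
    exfalso
    have h1 : Nat.card {e : N.toMDigraph.E // N.toMDigraph.tgt e = N.leaf x} = 1 :=
      N.leaf_in x
    have := (Nat.card_eq_one_iff_unique.mp h1).2
    obtain ⟨⟨e, he⟩⟩ := this
    exact hno ⟨e, he⟩

end PhyloNetwork

/-- Corollary: induced B-quartets persist.
Let `N⁺` be a rooted binary phylogenetic network on taxon set `X` and `M⁺` the
induced network on `Y ⊆ X` (represented by the subnetwork of nodes and edges
ancestral to taxa of `Y`; suppressing degree-2 nodes changes no blob,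
cut-edge, or separation structure).  Then any set of four taxa of `Y` that is
a B-quartet on `M⁺` is a B-quartet on `N⁺`. -/
theorem stmt_2 {X : Type} (N : PhyloNetwork X) (Y : Set X)
    (a b c d : X) (ha : a ∈ Y) (hb : b ∈ Y) (hc : c ∈ Y) (hd : d ∈ Y)
    (hpair : List.Pairwise (· ≠ ·) [a, b, c, d])
    (h : BQuartetIn (N.inducedSub Y) N.leaf a b c d) :
    BQuartetIn (top N.toMDigraph) N.leaf a b c d := by
  classical
  obtain ⟨B, ⟨hBle, hBconn, hBnc, _⟩, hdet⟩ := h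
  obtain ⟨b0, hb0⟩ := hBconn.1
  refine ⟨classBlob N.toMDigraph b0,
    isBlobIn_classBlob _ (fun u v => N.conn u v) b0, ?_⟩
  intro s hs t ht hst hcon
  have hBK : ∀ u ∈ B.verts, N.toMDigraph.RRel b0 u := fun u hu =>
    subgraph_rrel hBconn hBnc hb0 hu
  -- boundary edges of the class are incident cut edges of the full network
  have hxorcut : ∀ e : N.toMDigraph.E,
      Xor' (N.toMDigraph.src e ∈ (classBlob N.toMDigraph b0).verts)
        (N.toMDigraph.tgt e ∈ (classBlob N.toMDigraph b0).verts) →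
      IncidentCut (top N.toMDigraph) (classBlob N.toMDigraph b0) e := by
    intro e hx
    refine ⟨isCutEdge_of_not_conn (H := top N.toMDigraph) (Set.mem_univ e) ?_, hx⟩
    intro hc
    have hr : N.toMDigraph.RRel (N.toMDigraph.src e) (N.toMDigraph.tgt e) :=
      rrel_of_conn_del (Or.inl ⟨rfl, rfl⟩) hc
    rcases hx with ⟨h1, h2⟩ | ⟨h1, h2⟩
    · exact h2 (rrel_trans h1 hr)
    · exact h2 (rrel_trans h1 (rrel_symm hr))
  have hF0 : ∀ e ∈ {e ∈ (top N.toMDigraph).edges |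
      ¬ IncidentCut (top N.toMDigraph) (classBlob N.toMDigraph b0) e},
      (N.toMDigraph.src e ∈ (classBlob N.toMDigraph b0).verts ↔
        N.toMDigraph.tgt e ∈ (classBlob N.toMDigraph b0).verts) := by
    intro e he
    have hnx := fun hx => he.2 (hxorcut e hx)
    constructor
    · intro h1; by_contra h2; exact hnx (Or.inl ⟨h1, h2⟩)
    · intro h1; by_contra h2; exact hnx (Or.inr ⟨h1, h2⟩)
  have hiff := conn_iff_mem hF0 hcon
  by_cases hsK : N.leaf s ∈ (classBlob N.toMDigraph b0).verts
  · -- the class is the trivial class of the leaf of `s`; then `leaf t` is also in it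
    have htK := hiff.mp hsK
    have h1 : N.toMDigraph.RRel (N.leaf s) (N.leaf t) :=
      rrel_trans (rrel_symm hsK) htK
    exact hst (N.leaf_inj (N.rrel_leaf h1)).symm
  · have htK : N.leaf t ∉ (classBlob N.toMDigraph b0).verts := fun hh => hsK (hiff.mpr hh)
    have hconF1 := conn_restrict_notmem hF0 hcon hsK
    have hsY : s ∈ Y := by
      rcases hs with rfl | rfl | rfl | rfl <;> assumption
    have htY : t ∈ Y := by
      rcases ht with rfl | rfl | rfl | rfl <;> assumption
    have hsM : N.leaf s ∈ (N.inducedSub Y).verts := ⟨s, hsY, .refl⟩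
    have htM : N.leaf t ∈ (N.inducedSub Y).verts := ⟨t, htY, .refl⟩
    have hb0M : b0 ∈ (N.inducedSub Y).verts := hBle.1 hb0
    have hb0K : b0 ∈ (classBlob N.toMDigraph b0).verts := rrel_refl _ b0
    obtain ⟨ws, ps, gs, hws, hps, hgs, hos, hcs⟩ :=
      exists_exit (N.induced_conn hsM hb0M) hsK hb0K
    obtain ⟨wt, pt, gt, hwt, hpt, hgt, hot, hct⟩ :=
      exists_exit (N.induced_conn htM hb0M) htK hb0K
    have hgseq : gs = gt := by
      by_contra hne
      have hppK : N.toMDigraph.RRel ps pt := rrel_trans (rrel_symm hps) hpt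
      have c1 : N.toMDigraph.Conn (Set.univ \ {gs}) ps pt :=
        conn_mono (conn_inClass hps hpt (hppK gs)) (fun f hf => hf.1)
      have hF2sub : {e ∈ (N.inducedSub Y).edges |
          N.toMDigraph.src e ∉ (classBlob N.toMDigraph b0).verts ∧
          N.toMDigraph.tgt e ∉ (classBlob N.toMDigraph b0).verts} ⊆ Set.univ \ {gs} := by
        rintro f ⟨_, h1, h2⟩
        refine ⟨trivial, fun hf => ?_⟩
        have hfgs : f = gs := hf
        subst hfgs
        rcases hos with ⟨hsrc, htgt⟩ | ⟨hsrc, htgt⟩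
        · exact h2 (htgt ▸ hps)
        · exact h1 (hsrc ▸ hps)
      have hF1sub : {e ∈ {e ∈ (top N.toMDigraph).edges |
          ¬ IncidentCut (top N.toMDigraph) (classBlob N.toMDigraph b0) e} |
          N.toMDigraph.src e ∉ (classBlob N.toMDigraph b0).verts ∧
          N.toMDigraph.tgt e ∉ (classBlob N.toMDigraph b0).verts} ⊆ Set.univ \ {gs} := by
        rintro f ⟨_, h1, h2⟩
        refine ⟨trivial, fun hf => ?_⟩
        have hfgs : f = gs := hf
        subst hfgs
        rcases hos with ⟨hsrc, htgt⟩ | ⟨hsrc, htgt⟩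
        · exact h2 (htgt ▸ hps)
        · exact h1 (hsrc ▸ hps)
      have c2 : N.toMDigraph.Conn (Set.univ \ {gs}) pt wt := by
        refine Relation.ReflTransGen.single ⟨gt, ⟨trivial, fun hh => hne (Eq.symm hh)⟩, ?_⟩
        rcases hot with ⟨h1, h2⟩ | ⟨h1, h2⟩
        · exact Or.inr ⟨h1, h2⟩
        · exact Or.inl ⟨h1, h2⟩
      have c3 : N.toMDigraph.Conn (Set.univ \ {gs}) wt (N.leaf t) :=
        conn_symm (conn_mono hct hF2sub)
      have c4 : N.toMDigraph.Conn (Set.univ \ {gs}) (N.leaf t) (N.leaf s) :=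
        conn_symm (conn_mono hconF1 hF1sub)
      have c5 : N.toMDigraph.Conn (Set.univ \ {gs}) (N.leaf s) ws :=
        conn_mono hcs hF2sub
      have call : N.toMDigraph.Conn (Set.univ \ {gs}) ps ws :=
        c1.trans (c2.trans (c3.trans (c4.trans c5)))
      have hor : (N.toMDigraph.src gs = ps ∧ N.toMDigraph.tgt gs = ws) ∨
          (N.toMDigraph.src gs = ws ∧ N.toMDigraph.tgt gs = ps) := by
        rcases hos with ⟨h1, h2⟩ | ⟨h1, h2⟩
        · exact Or.inr ⟨h1, h2⟩
        · exact Or.inl ⟨h1, h2⟩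
      have hrr : N.toMDigraph.RRel ps ws := rrel_of_conn_del hor call
      exact hws (rrel_trans hps hrr)
    subst hgseq
    have hwseq : ws = wt := by
      rcases hos with ⟨h1, h2⟩ | ⟨h1, h2⟩ <;> rcases hot with ⟨h3, h4⟩ | ⟨h3, h4⟩
      · exact h1.symm.trans h3
      · exact absurd ((h3.symm.trans h1) ▸ hpt) hws
      · exact absurd ((h1.symm.trans h3) ▸ hps) hwt
      · exact h2.symm.trans h4
    have hct' : N.toMDigraph.Conn {e ∈ (N.inducedSub Y).edges |
        N.toMDigraph.src e ∉ (classBlob N.toMDigraph b0).verts ∧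
        N.toMDigraph.tgt e ∉ (classBlob N.toMDigraph b0).verts} (N.leaf t) ws := by
      rw [hwseq]; exact hct
    have hfinal : N.toMDigraph.Conn {e ∈ (N.inducedSub Y).edges |
        ¬ IncidentCut (N.inducedSub Y) B e} (N.leaf s) (N.leaf t) := by
      refine conn_mono (hcs.trans (conn_symm hct')) ?_
      rintro f ⟨hfM, h1, h2⟩
      refine ⟨hfM, fun hic => ?_⟩
      rcases hic.2 with ⟨hm, _⟩ | ⟨hm, _⟩
      · exact h1 (hBK _ hm)
      · exact h2 (hBK _ hm)
    exact hdet s hs t ht hst hfinal
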